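/- For each n ≥ 1 and each function F : {1,…,n−1} → {0,1,…,n−1}, define threads P^F_0 = S and P^F_{i+1} = P^F_{F(i+1)} ⊴ a ⊵ P^F_i. Then for distinct functions F ≠ G, the threads P^F_{n−1} and P^G_{n−1} are distinct; hence there are at least n^{n−1} pairwise distinct regular threads with at most n states over the single action a. -/

import Mathlib

/-- Basic Thread Algebra: freely generated by `S`, `D` and postconditional
composition `pcc P a Q` (i.e. `P ⊴ a ⊵ Q`). -/
inductive BTA (A : Type) : Type
  | S : BTA A
  | D : BTA A
  | pcc : BTA A → A → BTA A → BTA A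

namespace BTA

variable {A : Type}

/-- The approximation operator `π`. -/
def pi : ℕ → BTA A → BTA A
  | 0, _ => D
  | _+1, S => S
  | _+1, D => D
  | n+1, pcc P a Q => pcc (pi n P) a (pi n Q)

end BTA
theorem BTA.pi_pi {A : Type} : ∀ (n : ℕ) (P : BTA A),
    BTA.pi n (BTA.pi (n+1) P) = BTA.pi n P := by
  intro n
  induction n with
  | zero => intro P; rfl
  | succ n ih => intro P; cases P <;> simp [BTA.pi, ih]

/-- `BTA^∞`: the completion of BTA, given by projective sequences. -/
def BTAinf (A : Type) : Type := {f : ℕ → BTA A // ∀ n, BTA.pi n (f (n+1)) = f n}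

/-- The thread `S` in `BTA^∞`. -/
def Sinf (A : Type) : BTAinf A :=
  ⟨fun n => match n with | 0 => BTA.D | _+1 => BTA.S, by intro n; cases n <;> rfl⟩

/-- The thread `D` in `BTA^∞`. -/
def Dinf (A : Type) : BTAinf A := ⟨fun _ => BTA.D, by intro n; cases n <;> rfl⟩

/-- Postconditional composition `x ⊴ a ⊵ y` on `BTA^∞`. -/
def pccInf {A : Type} (a : A) (x y : BTAinf A) : BTAinf A :=
  ⟨fun n => match n with
    | 0 => BTA.D
    | n+1 => BTA.pcc (x.1 n) a (y.1 n),
   by intro n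
      cases n with
      | zero => rfl
      | succ n =>
          show BTA.pi (n+1) (BTA.pcc (x.1 (n+1)) a (y.1 (n+1))) = _
          simp [BTA.pi, x.2 n, y.2 n]⟩

/-- The right-hand sides of a finite linear recursive specification with
index set `Fin n`: each is `S`, `D`, or `x_j ⊴ a ⊵ x_k`. -/
inductive LinTerm (A : Type) (n : ℕ) : Type
  | S : LinTerm A n
  | D : LinTerm A n
  | pcc (j : Fin n) (a : A) (k : Fin n) : LinTerm A n

/-- `P` is a solution of the finite linear recursive specification `t`. -/
def IsSolution {A : Type} {n : ℕ} (t : Fin n → LinTerm A n)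
    (P : Fin n → BTAinf A) : Prop :=
  ∀ i : Fin n,
    match t i with
    | LinTerm.S => P i = Sinf A
    | LinTerm.D => P i = Dinf A
    | LinTerm.pcc j a k => P i = pccInf a (P j) (P k)

/-- `P` is the family of threads `P^F_0, …, P^F_n` over the single action `a`
determined by `F : {1,…,n} → {0,…,n}`:
`P^F_0 = S` and `P^F_{i+1} = P^F_{F(i+1)} ⊴ a ⊵ P^F_i`
(here `F i` stands for `F(i+1)`, `i.succ` for `i+1` and `i.castSucc` for `i`). -/
def FamFor {A : Type} (a : A) {n : ℕ} (F : Fin n → Fin (n+1))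
    (P : Fin (n+1) → BTAinf A) : Prop :=
  P 0 = Sinf A ∧
  ∀ i : Fin n, P i.succ = pccInf a (P (F i)) (P i.castSucc)

/-!
Two facts about `BTA^∞` suffice: postconditional composition is injective and never equals `S`.
Peeling off the right branches of `P^F_n = P^G_n` gives `P^F_i = P^G_i` for every `i`, and then
the left branches give `P^F_{F(i+1)} = P^G_{G(i+1)}`. Finally, a thread determines its index in
the family: `P_i` is `S` followed by exactly `i` nested right branches.
-/

theorem BTAinf.ext {A : Type} {x y : BTAinf A} (h : ∀ m, x.1 m = y.1 m) : x = y :=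
  Subtype.ext (funext h)

theorem pccInf_injective {A : Type} {a b : A} {x y x' y' : BTAinf A}
    (h : pccInf a x y = pccInf b x' y') : x = x' ∧ a = b ∧ y = y' := by
  have hm : ∀ m, BTA.pcc (x.1 m) a (y.1 m) = BTA.pcc (x'.1 m) b (y'.1 m) :=
    fun m => congrArg (fun z : BTAinf A => z.1 (m + 1)) h
  exact ⟨BTAinf.ext fun m => (BTA.pcc.inj (hm m)).1, (BTA.pcc.inj (hm 0)).2.1,
    BTAinf.ext fun m => (BTA.pcc.inj (hm m)).2.2⟩

theorem pccInf_ne_Sinf {A : Type} (a : A) (x y : BTAinf A) : pccInf a x y ≠ Sinf A := by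
  intro h
  cases congrArg (fun z : BTAinf A => z.1 1) h

namespace FamFor

variable {A : Type} {a : A} {n : ℕ} {F G : Fin n → Fin (n+1)} {P Q : Fin (n+1) → BTAinf A}

theorem index_eq_of_eq (hP : FamFor a F P) (hQ : FamFor a G Q) {i j : Fin (n+1)}
    (h : P i = Q j) : i = j := by
  induction i using Fin.induction generalizing j with
  | zero =>
    cases j using Fin.cases with
    | zero => rfl
    | succ l => exact absurd (hP.1 ▸ hQ.2 l ▸ h.symm) (pccInf_ne_Sinf _ _ _)
  | succ k ih =>
    cases j using Fin.cases with
    | zero => exact absurd (hQ.1 ▸ hP.2 k ▸ h) (pccInf_ne_Sinf _ _ _)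
    | succ l =>
      rw [hP.2 k, hQ.2 l] at h
      exact congrArg Fin.succ (Fin.castSucc_inj.mp (ih (pccInf_injective h).2.2))

theorem eq_of_last_eq (hP : FamFor a F P) (hQ : FamFor a G Q)
    (h : P (Fin.last n) = Q (Fin.last n)) : P = Q := by
  funext i
  induction i using Fin.reverseInduction with
  | last => exact h
  | cast k ih =>
    rw [hP.2 k, hQ.2 k] at ih
    exact (pccInf_injective ih).2.2

theorem fun_eq_of_last_eq (hP : FamFor a F P) (hQ : FamFor a G Q)
    (h : P (Fin.last n) = Q (Fin.last n)) : F = G := by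
  funext i
  have hsucc := congrFun (hP.eq_of_last_eq hQ h) i.succ
  rw [hP.2 i, hQ.2 i] at hsucc
  exact hP.index_eq_of_eq hQ (pccInf_injective hsucc).1

end FamFor

/-- For distinct `F ≠ G` the threads `P^F_{n}` and `P^G_{n}` are distinct;
hence any choice of solutions yields `(n+1)^n` pairwise distinct regular
threads with at most `n+1` states over the single action `a`. -/
theorem famFor_injective {A : Type} (a : A) (n : ℕ) :
    (∀ (F G : Fin n → Fin (n+1)) (P Q : Fin (n+1) → BTAinf A),
      FamFor a F P → FamFor a G Q → F ≠ G →
        P (Fin.last n) ≠ Q (Fin.last n)) ∧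
    (∀ sol : (Fin n → Fin (n+1)) → Fin (n+1) → BTAinf A,
      (∀ F, FamFor a F (sol F)) →
        Function.Injective (fun F => sol F (Fin.last n))) :=
  ⟨fun _ _ _ _ hP hQ hFG h => hFG (hP.fun_eq_of_last_eq hQ h),
   fun _ hsol F G h => (hsol F).fun_eq_of_last_eq (hsol G) h⟩
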